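/- arXiv:2202.07292 — 2 statements merged into one kernel-verified Lean document; each statement's English description precedes it below -/
import Mathlib

section
/- For the linear model f(x) = Σᵢ wᵢ xᵢ with all weights wᵢ > 0 and inputs restricted to [0,1]ⁿ, the Contextual Importance of the single feature k relative to all features equals wₖ / (Σᵢ wᵢ), independently of the context C. -/
/-!
In the coordinatewise order on `ι → ℝ`, both the unit cube and its slice through `C` along
coordinate `k` are order intervals, and a linear form with nonnegative weights is monotone.
So the supremum and infimum of `f` over each are attained at the two endpoints, and the two
ranges are `f 1 - f 0 = ∑ i, w i` and `f (update C k 1) - f (update C k 0) = w k`.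
-/

open Set Function

lemma Monotone.sSup_image_Icc_sub_sInf {α : Type*} [Preorder α] {g : α → ℝ} (hg : Monotone g)
    {a b : α} (hab : a ≤ b) :
    sSup (g '' Icc a b) - sInf (g '' Icc a b) = g b - g a := by
  rw [(hg.map_isGreatest (isGreatest_Icc hab)).csSup_eq,
    (hg.map_isLeast (isLeast_Icc hab)).csInf_eq]

section Pi

variable {ι α : Type*}

lemma setOf_forall_mem_Icc_eq_Icc [Preorder α] (a b : α) :
    {x : ι → α | ∀ j, x j ∈ Icc a b} = Icc (fun _ ↦ a) (fun _ ↦ b) := by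
  ext x
  simp [Pi.le_def, forall_and]

lemma setOf_mem_Icc_and_eq_off_eq_Icc_update [DecidableEq ι] [PartialOrder α] {a b : α} {C : ι → α}
    (hC : ∀ j, C j ∈ Icc a b) (k : ι) :
    {x : ι → α | (∀ j, x j ∈ Icc a b) ∧ ∀ j ≠ k, x j = C j} =
      Icc (update C k a) (update C k b) := by
  ext x
  simp only [mem_ofPred_eq, mem_Icc, Pi.le_def]
  constructor
  · rintro ⟨hx, hxC⟩
    refine ⟨fun j ↦ ?_, fun j ↦ ?_⟩ <;> rcases eq_or_ne j k with rfl | hj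
    · simpa using (hx j).1
    · simp [update_of_ne hj, hxC j hj]
    · simpa using (hx j).2
    · simp [update_of_ne hj, hxC j hj]
  · rintro ⟨hlo, hhi⟩
    have hoff : ∀ j ≠ k, x j = C j := fun j hj ↦ by
      have hlo := hlo j; have hhi := hhi j
      rw [update_of_ne hj] at hlo hhi
      exact le_antisymm hhi hlo
    refine ⟨fun j ↦ ?_, hoff⟩
    rcases eq_or_ne j k with rfl | hj
    · simpa using And.intro (hlo j) (hhi j)
    · rw [hoff j hj]; exact hC j

variable [Fintype ι]

lemma monotone_sum_mul {w : ι → ℝ} (hw : ∀ i, 0 ≤ w i) :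
    Monotone fun x : ι → ℝ ↦ ∑ i, w i * x i :=
  fun _ _ hxy ↦ Finset.sum_le_sum fun i _ ↦ mul_le_mul_of_nonneg_left (hxy i) (hw i)

lemma sum_mul_update_sub_sum_mul_update [DecidableEq ι] (w C : ι → ℝ) (k : ι) (s t : ℝ) :
    ∑ i, w i * update C k t i - ∑ i, w i * update C k s i = w k * (t - s) := by
  rw [← Finset.sum_sub_distrib, Finset.sum_eq_single k]
  · simp only [update_self]; ring
  · intro i _ hi; simp [update_of_ne hi]
  · simp

end Pi

/-- For the linear model f(x) = Σ wᵢ xᵢ with wᵢ > 0 on [0,1]ⁿ,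
the Contextual Importance of feature k equals wₖ / Σ wᵢ. -/
theorem ci_linear_model
    (n : ℕ) (w : Fin n → ℝ) (hw : ∀ i, w i > 0)
    (f : (Fin n → ℝ) → ℝ) (hf : ∀ x, f x = ∑ i, w i * x i)
    (C : Fin n → ℝ) (hC : ∀ j, C j ∈ Set.Icc (0 : ℝ) 1)
    (k : Fin n)
    (Ek : Set (Fin n → ℝ))
    (hEk : Ek = {x | (∀ j, x j ∈ Set.Icc (0 : ℝ) 1) ∧ ∀ j ≠ k, x j = C j})
    (Eall : Set (Fin n → ℝ))
    (hEall : Eall = {x | ∀ j, x j ∈ Set.Icc (0 : ℝ) 1}) :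
    (sSup (f '' Ek) - sInf (f '' Ek)) / (sSup (f '' Eall) - sInf (f '' Eall)) =
      w k / ∑ i, w i := by
  obtain rfl : f = fun x ↦ ∑ i, w i * x i := funext hf
  have hmono := monotone_sum_mul fun i ↦ (hw i).le
  rw [hEk, hEall, setOf_mem_Icc_and_eq_off_eq_Icc_update hC, setOf_forall_mem_Icc_eq_Icc,
    hmono.sSup_image_Icc_sub_sInf (update_le_update_iff'.2 zero_le_one),
    hmono.sSup_image_Icc_sub_sInf fun _ ↦ zero_le_one, sum_mul_update_sub_sum_mul_update]
  simp
end

section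
/- For the linear model f(x) = Σᵢ wᵢ xᵢ with wᵢ > 0 and inputs in [0,1]ⁿ with utility u = identity, the Contextual Utility of feature k at context C equals Cₖ, the current value of that feature. -/
/-!
Freeing only the `k`-th coordinate turns `E({k})` into the segment `t ↦ update C k t`,
`t ∈ [0,1]`, along which the linear model is the increasing affine function
`t ↦ w k * t + const`. Min-max normalisation is invariant under increasing affine maps,
so it returns the position `C k` of the context inside `[0,1]`.
-/

open Set Function

theorem setOf_forall_mem_and_eq_off_eq_image_update {ι : Type*} [DecidableEq ι] {β : ι → Type*}
    (S : ∀ i, Set (β i)) (C : ∀ i, β i) (k : ι) (hC : ∀ j ≠ k, C j ∈ S j) :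
    {x | (∀ j, x j ∈ S j) ∧ ∀ j ≠ k, x j = C j} = update C k '' S k := by
  ext x
  constructor
  · rintro ⟨hxS, hxC⟩
    exact ⟨x k, hxS k, (eq_update_iff.mpr ⟨rfl, hxC⟩).symm⟩
  · rintro ⟨t, ht, rfl⟩
    refine ⟨fun j => ?_, fun j hj => update_of_ne hj _ _⟩
    rcases eq_or_ne j k with rfl | hj
    · simpa using ht
    · simpa [update_of_ne hj] using hC j hj

theorem sum_mul_update {ι R : Type*} [Fintype ι] [DecidableEq ι] [CommRing R]
    (w C : ι → R) (k : ι) (t : R) :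
    ∑ i, w i * update C k t i = w k * t + (∑ i, w i * C i - w k * C k) := by
  rw [← Finset.add_sum_erase _ _ (Finset.mem_univ k),
    ← Finset.add_sum_erase _ _ (Finset.mem_univ k), update_self, Finset.sum_congr rfl fun j hj => by rw [update_of_ne (Finset.ne_of_mem_erase hj)]]
  ring

theorem sub_sInf_div_sSup_sub_sInf_image_Icc_of_affine {g : ℝ → ℝ} {m b lo hi : ℝ} (hm : 0 < m)
    (hg : ∀ t, g t = m * t + b) (hlohi : lo ≤ hi) (c : ℝ) :
    (g c - sInf (g '' Icc lo hi)) / (sSup (g '' Icc lo hi) - sInf (g '' Icc lo hi))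
      = (c - lo) / (hi - lo) := by
  obtain rfl : g = (m * · + b) := funext hg
  have hle : m * lo + b ≤ m * hi + b := by gcongr
  rw [image_affine_Icc' hm, csInf_Icc hle, csSup_Icc hle]
  simp only [add_sub_add_right_eq_sub, ← mul_sub, mul_div_mul_left _ _ hm.ne']

/-- For the linear model with positive weights on [0,1]ⁿ and
identity utility, the Contextual Utility of feature k equals Cₖ. -/
theorem cu_linear_model
    (n : ℕ) (w : Fin n → ℝ) (hw : ∀ i, w i > 0)
    (f : (Fin n → ℝ) → ℝ) (hf : ∀ x, f x = ∑ i, w i * x i)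
    (C : Fin n → ℝ) (hC : ∀ j, C j ∈ Set.Icc (0 : ℝ) 1)
    (k : Fin n)
    (Ek : Set (Fin n → ℝ))
    (hEk : Ek = {x | (∀ j, x j ∈ Set.Icc (0 : ℝ) 1) ∧ ∀ j ≠ k, x j = C j}) :
    (f C - sInf (f '' Ek)) / (sSup (f '' Ek) - sInf (f '' Ek)) = C k := by
  have hEk_line : Ek = update C k '' Icc 0 1 :=
    hEk.trans (setOf_forall_mem_and_eq_off_eq_image_update _ C k fun j _ => hC j)
  have hf_line : ∀ t, (f ∘ update C k) t = w k * t + (f C - w k * C k) := fun t => by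
    simp only [comp_apply, hf, sum_mul_update]
  have key := sub_sInf_div_sSup_sub_sInf_image_Icc_of_affine (hw k) hf_line zero_le_one (C k)
  rwa [comp_apply, update_eq_self, image_comp, ← hEk_line, sub_zero, sub_zero, div_one] at key
end
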